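/- (Orthogonality/inversion identity.) For every α ∈ ℂ∖{0} (avoiding the poles of w_α and w_{1/α}) and all u, v ∈ S_p: ∑_{z ∈ S_p} w̄_α(u/z)·w̄_{1/α}(z/v) = δ_{u,v}·χ_α, where χ_α = α^{−l}·∏_{r=1}^{l} (α+q^{2r−1})(1+αq^{2r−1})/(1+q^{2r−1})² (equal to the z-independent product w_α(z)·w_{1/α}(z)). -/

import Mathlib

open scoped BigOperators Matrix

noncomputable section

namespace SG

/-- Index set for the Hilbert space `H`: tuples in `(S_p)^N`, with a `p`-th root of
unity `z = q^m` encoded by its exponent `m : ZMod p`, `p = 2*l+1`. -/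
abbrev Idx (l N : ℕ) := Fin N → ZMod (2*l+1)

/-- `q` raised to the power of an element of `ZMod (2*l+1)`. -/
def Qp (l : ℕ) (q : ℂ) (j : ZMod (2*l+1)) : ℂ := q ^ j.val

/-- The value `w_lam(q^(2n))` given by the defining product formula. -/
def wAux (l : ℕ) (q lam : ℂ) (n : ℕ) : ℂ :=
  (∏ r ∈ Finset.range n, (1 + lam * q ^ (2*r+1)) / (lam + q ^ (2*r+1))) *
    ∏ r ∈ Finset.range l, (lam + q ^ (2*r+1)) / (1 + q ^ (2*r+1))

/-- `w lam m` is the value `w_lam(q^m)`; since `p` is odd, `q^m = q^(2n)` with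
`n = (l+1)*m mod p`. -/
def w (l : ℕ) (q lam : ℂ) (m : ZMod (2*l+1)) : ℂ :=
  wAux l q lam (((l : ZMod (2*l+1)) + 1) * m).val

/-- The discrete Fourier transform `w̄_lam(q^m) = (1/p) ∑_k (q^m)^k w_lam(q^k)`. -/
def wbar (l : ℕ) (q lam : ℂ) (m : ZMod (2*l+1)) : ℂ :=
  (1 / (2*(l : ℂ)+1)) * ∑ k : ZMod (2*l+1), Qp l q (m * k) * w l q lam k

/-- Regularity: `mu` avoids the poles `{-q^(2r-1)}` of `w_mu` and `w̄_mu`. -/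
def Reg (q mu : ℂ) : Prop := ∀ r : ℕ, mu + q ^ (2*r+1) ≠ 0

/-- `ε = -i q^(-1/2)` with `q^(1/2) := q^(l+1)`. -/
def eps (l : ℕ) (q : ℂ) : ℂ := -Complex.I * (q ^ (l+1))⁻¹

/-- The operator `u_n` (with classical parameter `u n`), acting as multiplication
by `u n * z_n`. -/
def uop (l : ℕ) {N : ℕ} (q : ℂ) (u : Fin N → ℂ) (n : Fin N) :
    Matrix (Idx l N) (Idx l N) ℂ :=
  Matrix.diagonal fun k => u n * Qp l q (k n)

/-- The inverse of `u_n`. -/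
def uopInv (l : ℕ) {N : ℕ} (q : ℂ) (u : Fin N → ℂ) (n : Fin N) :
    Matrix (Idx l N) (Idx l N) ℂ :=
  Matrix.diagonal fun k => (u n)⁻¹ * Qp l q (-(k n))

/-- The operator `v_n` (with classical parameter `v n`): `(v_n ψ)(z) = v n * ψ(..., q⁻¹ z_n, ...)`. -/
def vop (l : ℕ) {N : ℕ} (v : Fin N → ℂ) (n : Fin N) :
    Matrix (Idx l N) (Idx l N) ℂ :=
  fun k k' => if k' = Function.update k n (k n - 1) then v n else 0

/-- The inverse of `v_n`. -/
def vopInv (l : ℕ) {N : ℕ} (v : Fin N → ℂ) (n : Fin N) :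
    Matrix (Idx l N) (Idx l N) ℂ :=
  fun k k' => if k' = Function.update k n (k n + 1) then (v n)⁻¹ else 0

/-- The Lax matrix `L_n(lam)` of the lattice Sine-Gordon model, a `2×2` matrix with
operator entries. -/
def Lax (l : ℕ) {N : ℕ} (q : ℂ) (κ ξ u v : Fin N → ℂ) (lam : ℂ) (n : Fin N) :
    Matrix (Fin 2) (Fin 2) (Matrix (Idx l N) (Idx l N) ℂ) :=
  (κ n / Complex.I) • !![
    Complex.I • (uop l q u n *
      (((q ^ (l+1))⁻¹ * κ n) • vop l v n + (q ^ (l+1) * (κ n)⁻¹) • vopInv l v n)),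
    (lam / ξ n) • vop l v n - (lam / ξ n)⁻¹ • vopInv l v n ;
    (lam / ξ n) • vopInv l v n - (lam / ξ n)⁻¹ • vop l v n,
    Complex.I • (uopInv l q u n *
      ((q ^ (l+1) * (κ n)⁻¹) • vop l v n + ((q ^ (l+1))⁻¹ * κ n) • vopInv l v n))]

/-- The monodromy matrix `M(lam) = L_N(lam) ⋯ L_1(lam)`. -/
def Mon (l : ℕ) {N : ℕ} (q : ℂ) (κ ξ u v : Fin N → ℂ) (lam : ℂ) :
    Matrix (Fin 2) (Fin 2) (Matrix (Idx l N) (Idx l N) ℂ) :=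
  ((List.ofFn fun n : Fin N => Lax l q κ ξ u v lam n).reverse).prod

/-- The transfer matrix `T(lam) = A(lam) + D(lam)`. -/
def Top (l : ℕ) {N : ℕ} (q : ℂ) (κ ξ u v : Fin N → ℂ) (lam : ℂ) :
    Matrix (Idx l N) (Idx l N) ℂ :=
  Mon l q κ ξ u v lam 0 0 + Mon l q κ ξ u v lam 1 1

/-- The operator `Y(lam)`, defined by its matrix elements. -/
def Yop (l : ℕ) {N : ℕ} [NeZero N] (q : ℂ) (κ ξ : Fin N → ℂ) (lam : ℂ) :
    Matrix (Idx l N) (Idx l N) ℂ :=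
  fun k k' => ∏ n : Fin N,
    wbar l q (eps l q * lam / (κ n * ξ n)) (k n - k' n) *
      w l q (eps l q * lam * κ n / ξ n) (k n + k' (n + 1))

/-- Regularity of all the `w`- and `w̄`-factors defining `Y(lam)`. -/
def RegY (l : ℕ) {N : ℕ} (q : ℂ) (κ ξ : Fin N → ℂ) (lam : ℂ) : Prop :=
  ∀ n : Fin N, Reg q (eps l q * lam / (κ n * ξ n)) ∧ Reg q (eps l q * lam * κ n / ξ n)

/-- The Baxter Q-operator `Q(lam, mu) = Y(lam) · Y(conj mu)†`. -/
def Qop (l : ℕ) {N : ℕ} [NeZero N] (q : ℂ) (κ ξ : Fin N → ℂ) (lam mu : ℂ) :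
    Matrix (Idx l N) (Idx l N) ℂ :=
  Yop l q κ ξ lam * (Yop l q κ ξ (starRingEnd ℂ mu))ᴴ

/-- The coefficient function `a_N(lam)` of the Baxter equation. -/
def aN (l : ℕ) {N : ℕ} (q : ℂ) (κ ξ : Fin N → ℂ) (lam : ℂ) : ℂ :=
  (-Complex.I) ^ N * ∏ r : Fin N,
    κ r / (lam / ξ r) * (1 + Complex.I * (q ^ (l+1))⁻¹ * (lam / ξ r) * κ r) *
      (1 + Complex.I * (q ^ (l+1))⁻¹ * (lam / ξ r) / κ r)

/-- The coefficient function `d_N(lam)` of the Baxter equation. -/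
def dN (l : ℕ) {N : ℕ} (q : ℂ) (κ ξ : Fin N → ℂ) (lam : ℂ) : ℂ :=
  Complex.I ^ N * ∏ r : Fin N,
    κ r / (lam / ξ r) * (1 - Complex.I * q ^ (l+1) * (lam / ξ r) * κ r) *
      (1 - Complex.I * q ^ (l+1) * (lam / ξ r) / κ r)

/-- The Θ-charge `Θ = ∏_{n=1}^N v_n^((-1)^(1+n)) = v_1 v_2⁻¹ v_3 v_4⁻¹ ⋯` (unit parameters). -/
def Theta (l : ℕ) {N : ℕ} : Matrix (Idx l N) (Idx l N) ℂ :=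
  (List.ofFn fun n : Fin N =>
    if Even (n : ℕ) then vop l (fun _ : Fin N => (1:ℂ)) n
    else vopInv l (fun _ : Fin N => (1:ℂ)) n).prod

/-- The scalar auxiliary R-matrix on `ℂ² ⊗ ℂ²`. -/
def Rmat (q lam : ℂ) : Matrix (Fin 2 × Fin 2) (Fin 2 × Fin 2) ℂ :=
  fun a b =>
    if a = b then (if a.1 = a.2 then q * lam - q⁻¹ * lam⁻¹ else lam - lam⁻¹)
    else if a.1 = b.2 ∧ a.2 = b.1 then q - q⁻¹ else 0

/-- The R-matrix with entries viewed as scalar multiples of the identity operator on `H`. -/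
def Rop (l N : ℕ) (q lam : ℂ) :
    Matrix (Fin 2 × Fin 2) (Fin 2 × Fin 2) (Matrix (Idx l N) (Idx l N) ℂ) :=
  (Rmat q lam).map fun c => c • (1 : Matrix (Idx l N) (Idx l N) ℂ)

/-- The classical (average) Lax matrix `𝓛_n(Λ)`, a scalar 2×2 matrix, built from
`K_n = κ_n^p`, `X_n = ξ_n^p`, `U_n = u_n^p`, `V_n = v_n^p`. -/
def Lcl (l : ℕ) {N : ℕ} (κ ξ u v : Fin N → ℂ) (L : ℂ) (n : Fin N) :
    Matrix (Fin 2) (Fin 2) ℂ :=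
  (1 / Complex.I ^ (2*l+1)) • !![
    Complex.I ^ (2*l+1) * (u n) ^ (2*l+1) *
      (((κ n) ^ (2*l+1)) ^ 2 * (v n) ^ (2*l+1) + ((v n) ^ (2*l+1))⁻¹),
    (κ n) ^ (2*l+1) * (L * (v n) ^ (2*l+1) / (ξ n) ^ (2*l+1)
      - (ξ n) ^ (2*l+1) / ((v n) ^ (2*l+1) * L)) ;
    (κ n) ^ (2*l+1) * (L / ((ξ n) ^ (2*l+1) * (v n) ^ (2*l+1))
      - (ξ n) ^ (2*l+1) * (v n) ^ (2*l+1) / L),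
    Complex.I ^ (2*l+1) * ((u n) ^ (2*l+1))⁻¹ *
      (((κ n) ^ (2*l+1)) ^ 2 * ((v n) ^ (2*l+1))⁻¹ + (v n) ^ (2*l+1))]

/-- The product `𝓛_N(Λ) 𝓛_{N-1}(Λ) ⋯ 𝓛_1(Λ)` of the classical Lax matrices. -/
def LclProd (l : ℕ) {N : ℕ} (κ ξ u v : Fin N → ℂ) (L : ℂ) : Matrix (Fin 2) (Fin 2) ℂ :=
  ((List.ofFn fun n : Fin N => Lcl l κ ξ u v L n).reverse).prod

/-- The average `𝒪(Λ) = ∏_{k=1}^{p} O(q^k λ)` of the monodromy matrix entry `M(·) i j`. -/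
def avgEntry (l : ℕ) {N : ℕ} (q : ℂ) (κ ξ u v : Fin N → ℂ) (i j : Fin 2) (lam : ℂ) :
    Matrix (Idx l N) (Idx l N) ℂ :=
  (List.ofFn fun k : Fin (2*l+1) => Mon l q κ ξ u v (q ^ ((k : ℕ) + 1) * lam) i j).prod

/-- The kernel matrix `Y_0`, `(Y_0)_{k,k'} = ∏_n q^(-2 k_n (k'_n + k'_{n+1}))`. -/
def Y0mat (l : ℕ) {N : ℕ} [NeZero N] (q : ℂ) : Matrix (Idx l N) (Idx l N) ℂ :=
  fun k k' => ∏ n : Fin N, Qp l q (-(2 * k n * (k' n + k' (n + 1))))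

/-- The kernel matrix `Y_∞`, `(Y_∞)_{k,k'} = ∏_n q^(+2 k_n (k'_n + k'_{n+1}))`. -/
def Yinfmat (l : ℕ) {N : ℕ} [NeZero N] (q : ℂ) : Matrix (Idx l N) (Idx l N) ℂ :=
  fun k k' => ∏ n : Fin N, Qp l q (2 * k n * (k' n + k' (n + 1)))

end SG


section OrthAux
open SG Finset

lemma qpow_mod (l : ℕ) (q : ℂ) (hq : IsPrimitiveRoot q (2*l+1)) (a : ℕ) :
    q ^ (a % (2*l+1)) = q ^ a := by
  conv_rhs => rw [← Nat.div_add_mod a (2*l+1)]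
  rw [pow_add, pow_mul, hq.pow_eq_one, one_pow, one_mul]

lemma Qp_add (l : ℕ) (q : ℂ) (hq : IsPrimitiveRoot q (2*l+1)) (x y : ZMod (2*l+1)) :
    Qp l q (x + y) = Qp l q x * Qp l q y := by
  unfold Qp
  rw [ZMod.val_add, qpow_mod l q hq, pow_add]

lemma sum_Qp (l : ℕ) (q : ℂ) (hq : IsPrimitiveRoot q (2*l+1)) (m : ZMod (2*l+1)) :
    ∑ z : ZMod (2*l+1), Qp l q (z * m) = if m = 0 then ((2*l+1 : ℕ) : ℂ) else 0 := by
  by_cases hm : m = 0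
  · simp [hm, Qp, ZMod.card]
  · simp only [hm, if_false]
    have hvpos : 0 < m.val := Nat.pos_of_ne_zero fun h => hm ((ZMod.val_eq_zero m).mp h)
    have hne : q ^ m.val ≠ 1 := hq.pow_ne_one_of_pos_of_lt hvpos.ne' (ZMod.val_lt m)
    have key : ∀ z : ZMod (2*l+1), Qp l q (z * m) = (q ^ m.val) ^ z.val := by
      intro z
      unfold Qp
      rw [ZMod.val_mul, qpow_mod l q hq, mul_comm, pow_mul]
    rw [Finset.sum_congr rfl fun z _ => key z]
    have hbij : ∑ z : ZMod (2*l+1), (q ^ m.val) ^ z.val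
        = ∑ i ∈ Finset.range (2*l+1), (q ^ m.val) ^ i := by
      refine Finset.sum_nbij' (fun z => z.val) (fun i => (i : ZMod (2*l+1))) ?_ ?_ ?_ ?_ ?_
      · intro z _; exact Finset.mem_range.mpr (ZMod.val_lt z)
      · intro i _; exact Finset.mem_univ _
      · intro z _; simp [ZMod.natCast_val, ZMod.cast_id]
      · intro i hi; exact ZMod.val_cast_of_lt (Finset.mem_range.mp hi)
      · intro z _; rfl
    rw [hbij, geom_sum_eq hne, ← pow_mul, mul_comm m.val, pow_mul, hq.pow_eq_one, one_pow,
      sub_self, zero_div]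

lemma wAux_pair (l : ℕ) (q : ℂ) (α : ℂ) (hα0 : α ≠ 0) (h1 : Reg q α) (h2 : Reg q α⁻¹)
    (n : ℕ) :
    wAux l q α n * wAux l q α⁻¹ n =
      (α ^ l)⁻¹ * ∏ r ∈ Finset.range l,
        (α + q ^ (2*r+1)) * (1 + α * q ^ (2*r+1)) / (1 + q ^ (2*r+1)) ^ 2 := by
  unfold wAux
  rw [mul_mul_mul_comm, ← Finset.prod_mul_distrib, ← Finset.prod_mul_distrib]
  have hP : (∏ r ∈ Finset.range n,
      ((1 + α * q ^ (2*r+1)) / (α + q ^ (2*r+1)) *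
        ((1 + α⁻¹ * q ^ (2*r+1)) / (α⁻¹ + q ^ (2*r+1))))) = 1 := by
    apply Finset.prod_eq_one
    intro r _
    have hc1 := h1 r
    have hc2 := h2 r
    have e1 : 1 + α * q ^ (2*r+1) = α * (α⁻¹ + q ^ (2*r+1)) := by
      rw [mul_add, mul_inv_cancel₀ hα0]
    have e2 : 1 + α⁻¹ * q ^ (2*r+1) = α⁻¹ * (α + q ^ (2*r+1)) := by
      rw [mul_add, inv_mul_cancel₀ hα0]
    rw [e1, e2, div_mul_div_comm, div_eq_one_iff_eq (mul_ne_zero hc1 hc2),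
      mul_mul_mul_comm, mul_inv_cancel₀ hα0, one_mul, mul_comm]
  rw [hP, one_mul]
  have hT : ∀ r ∈ Finset.range l,
      (α + q ^ (2*r+1)) / (1 + q ^ (2*r+1)) * ((α⁻¹ + q ^ (2*r+1)) / (1 + q ^ (2*r+1)))
        = α⁻¹ * ((α + q ^ (2*r+1)) * (1 + α * q ^ (2*r+1)) / (1 + q ^ (2*r+1)) ^ 2) := by
    intro r _
    by_cases h : (1 + q ^ (2*r+1)) = 0
    · rw [h]
      simp
    · field_simp
  rw [Finset.prod_congr rfl hT, Finset.prod_mul_distrib, Finset.prod_const,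
    Finset.card_range, inv_pow]

lemma w_pair (l : ℕ) (q : ℂ) (α : ℂ) (hα0 : α ≠ 0) (h1 : Reg q α) (h2 : Reg q α⁻¹)
    (k : ZMod (2*l+1)) :
    w l q α k * w l q α⁻¹ k =
      (α ^ l)⁻¹ * ∏ r ∈ Finset.range l,
        (α + q ^ (2*r+1)) * (1 + α * q ^ (2*r+1)) / (1 + q ^ (2*r+1)) ^ 2 :=
  wAux_pair l q α hα0 h1 h2 _

end OrthAux

open SG
/-- **Orthogonality/inversion identity**: for `u, v ∈ S_p` (encoded by exponents `a, b`),
`∑_{z∈S_p} w̄_α(u/z)·w̄_{1/α}(z/v) = δ_{u,v}·χ_α`. -/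
theorem orthogonality_identity (l : ℕ) (hl : 1 ≤ l)
    (q : ℂ) (hq : IsPrimitiveRoot q (2*l+1))
    (α : ℂ) (hα0 : α ≠ 0) (h1 : Reg q α) (h2 : Reg q α⁻¹) :
    ∀ a b : ZMod (2*l+1),
      ∑ z : ZMod (2*l+1), wbar l q α (a - z) * wbar l q α⁻¹ (z - b)
        = (if a = b then 1 else 0) *
            ((α ^ l)⁻¹ * ∏ r ∈ Finset.range l,
              (α + q ^ (2*r+1)) * (1 + α * q ^ (2*r+1)) / (1 + q ^ (2*r+1)) ^ 2) := by
  intro a b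
  have hp0 : ((2*l+1 : ℕ) : ℂ) ≠ 0 := Nat.cast_ne_zero.mpr (Nat.succ_ne_zero _)
  have hcast : (2*(l:ℂ)+1) = ((2*l+1 : ℕ) : ℂ) := by push_cast; ring
  set P : ℂ := ((2*l+1 : ℕ) : ℂ) with hP
  set χ : ℂ := (α ^ l)⁻¹ * ∏ r ∈ Finset.range l,
      (α + q ^ (2*r+1)) * (1 + α * q ^ (2*r+1)) / (1 + q ^ (2*r+1)) ^ 2 with hχ
  have hsplit : ∀ z k j : ZMod (2*l+1),
      Qp l q ((a-z)*k) * Qp l q ((z-b)*j) = Qp l q (a*k - b*j) * Qp l q (z*(j-k)) := by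
    intro z k j
    rw [← Qp_add l q hq, ← Qp_add l q hq]
    congr 1
    ring
  calc ∑ z : ZMod (2*l+1), wbar l q α (a - z) * wbar l q α⁻¹ (z - b)
      = ∑ z : ZMod (2*l+1), ∑ k : ZMod (2*l+1), ∑ j : ZMod (2*l+1),
          (1/P)^2 * (Qp l q ((a-z)*k) * Qp l q ((z-b)*j)) * (w l q α k * w l q α⁻¹ j) := by
        refine Finset.sum_congr rfl fun z _ => ?_
        rw [wbar, wbar, hcast, mul_mul_mul_comm, Finset.sum_mul_sum, Finset.mul_sum]
        refine Finset.sum_congr rfl fun k _ => ?_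
        rw [Finset.mul_sum]
        refine Finset.sum_congr rfl fun j _ => ?_
        ring
    _ = ∑ k : ZMod (2*l+1), ∑ j : ZMod (2*l+1),
          ((1/P)^2 * Qp l q (a*k - b*j) * (w l q α k * w l q α⁻¹ j)) *
            (if j - k = 0 then P else 0) := by
        rw [Finset.sum_comm]
        refine Finset.sum_congr rfl fun k _ => ?_
        rw [Finset.sum_comm]
        refine Finset.sum_congr rfl fun j _ => ?_
        rw [← sum_Qp l q hq (j - k), Finset.mul_sum]
        refine Finset.sum_congr rfl fun z _ => ?_
        rw [hsplit z k j]
        ring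
    _ = ∑ k : ZMod (2*l+1),
          ((1/P)^2 * Qp l q (a*k - b*k) * (w l q α k * w l q α⁻¹ k)) * P := by
        refine Finset.sum_congr rfl fun k _ => ?_
        simp only [sub_eq_zero, mul_ite, mul_zero, Finset.sum_ite_eq', Finset.mem_univ,
          if_true]
    _ = ∑ k : ZMod (2*l+1), ((1/P)^2 * χ * P) * Qp l q (k * (a-b)) := by
        refine Finset.sum_congr rfl fun k _ => ?_
        have harg : a*k - b*k = k*(a-b) := by ring
        rw [harg, w_pair l q α hα0 h1 h2 k, ← hχ]
        ring
    _ = ((1/P)^2 * χ * P) * (if a - b = 0 then P else 0) := by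
        rw [← Finset.mul_sum, sum_Qp l q hq (a-b)]
    _ = (if a = b then 1 else 0) * χ := by
        by_cases hab : a = b
        · simp only [hab, sub_self, if_pos rfl, one_mul, if_true]
          field_simp
        · simp [hab, sub_eq_zero]
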